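/- Suppose F (defined from a partition M = D + Δ with ‖G‖‖Δ‖ < 3 − 2√2) has a unique fixed point Z* in the ball B_{√2}(I), and suppose some column of Z* is an eigenvector of M lying in an eigenspace of M of dimension at least 2. Then F has infinitely many fixed points in B_{√2}(I) — contradiction; hence no column of Z* lies in an eigenspace of dimension greater than one. -/

import Mathlib

/-!
Column `k` of `F Z` depends only on column `k` of `Z`, and a column `z` with `z k = 1` is fixed
by `F` as soon as `z` is an eigenvector of `M = D + Δ`. If the eigenspace of the `i`-th column of
`Zs` had dimension at least two, it would contain `u ≠ 0` with `u i = 0`; replacing that column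
by `Zs_i + t u` then gives a line of fixed points through `Zs`. The contraction bound puts `Zs`
in the open ball `B_{√2}(I)`, so small `t ≠ 0` give fixed points in the ball other than `Zs`.
-/

open Matrix Filter Topology
open scoped Matrix.Norms.L2Operator

namespace Matrix

variable {𝕜 m n : Type*} [RCLike 𝕜] [Fintype m] [Fintype n] [DecidableEq n]

lemma l2_opNorm_le_of_sum_norm_sq_le (A : Matrix m n 𝕜) {c : ℝ} (hc : 0 ≤ c)
    (h : ∀ x : n → 𝕜, ∑ j, ‖(A *ᵥ x) j‖ ^ 2 ≤ c ^ 2 * ∑ k, ‖x k‖ ^ 2) :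
    ‖A‖ ≤ c := by
  rw [l2_opNorm_def]
  refine ContinuousLinearMap.opNorm_le_bound _ hc fun x => ?_
  refine (sq_le_sq₀ (norm_nonneg _) (by positivity)).mp ?_
  rw [mul_pow, EuclideanSpace.norm_sq_eq, EuclideanSpace.norm_sq_eq]
  exact h x

lemma sum_norm_sq_col_le_l2_opNorm_sq (A : Matrix m n 𝕜) (k : n) :
    ∑ j, ‖A j k‖ ^ 2 ≤ ‖A‖ ^ 2 := by
  have h := A.l2_opNorm_mulVec (EuclideanSpace.single k 1)
  rw [PiLp.norm_single, norm_one, mul_one] at h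
  have h2 := pow_le_pow_left₀ (norm_nonneg _) h 2
  rw [EuclideanSpace.norm_sq_eq] at h2
  simpa [mulVec_single] using h2

lemma sum_norm_sq_row_le_l2_opNorm_sq (A : Matrix m n 𝕜) (j : m) :
    ∑ k, ‖A j k‖ ^ 2 ≤ ‖A‖ ^ 2 := by
  classical
  simpa [l2_opNorm_conjTranspose] using Aᴴ.sum_norm_sq_col_le_l2_opNorm_sq j

lemma norm_entry_le_l2_opNorm (A : Matrix m n 𝕜) (j : m) (k : n) : ‖A j k‖ ≤ ‖A‖ := by
  refine (sq_le_sq₀ (norm_nonneg _) (norm_nonneg _)).mp ?_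
  exact (Finset.single_le_sum (fun j _ => sq_nonneg ‖A j k‖) (Finset.mem_univ j)).trans
    (A.sum_norm_sq_col_le_l2_opNorm_sq k)

lemma l2_opNorm_diagonal_diag_le (A : Matrix n n 𝕜) :
    ‖diagonal A.diag‖ ≤ ‖A‖ := by
  rw [l2_opNorm_diagonal]
  exact (pi_norm_le_iff_of_nonneg (norm_nonneg A)).mpr fun k => A.norm_entry_le_l2_opNorm k k

lemma l2_opNorm_one_le : ‖(1 : Matrix n n 𝕜)‖ ≤ 1 := by
  rw [← diagonal_one, l2_opNorm_diagonal]
  exact (pi_norm_le_iff_of_nonneg zero_le_one).mpr fun _ => norm_one.le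

lemma norm_sq_hadamard_mulVec_apply_le (A B : Matrix m n 𝕜) (x : n → 𝕜) (j : m) :
    ‖((A ⊙ B) *ᵥ x) j‖ ^ 2 ≤ ‖A‖ ^ 2 * ∑ k, ‖B j k‖ ^ 2 * ‖x k‖ ^ 2 := by
  have htri : ‖((A ⊙ B) *ᵥ x) j‖ ≤ ∑ k, ‖A j k‖ * (‖B j k‖ * ‖x k‖) := by
    refine (norm_sum_le _ _).trans_eq ?_
    simp only [hadamard_apply, norm_mul, mul_assoc]
  calc ‖((A ⊙ B) *ᵥ x) j‖ ^ 2 ≤ (∑ k, ‖A j k‖ * (‖B j k‖ * ‖x k‖)) ^ 2 :=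
        pow_le_pow_left₀ (norm_nonneg _) htri 2
    _ ≤ (∑ k, ‖A j k‖ ^ 2) * ∑ k, (‖B j k‖ * ‖x k‖) ^ 2 :=
        Finset.sum_mul_sq_le_sq_mul_sq _ _ _
    _ ≤ ‖A‖ ^ 2 * ∑ k, ‖B j k‖ ^ 2 * ‖x k‖ ^ 2 := by
        simp only [mul_pow]
        gcongr
        exact A.sum_norm_sq_row_le_l2_opNorm_sq j

lemma l2_opNorm_hadamard_le (A B : Matrix m n 𝕜) : ‖A ⊙ B‖ ≤ ‖A‖ * ‖B‖ := by
  refine l2_opNorm_le_of_sum_norm_sq_le _ (by positivity) fun x => ?_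
  calc ∑ j, ‖((A ⊙ B) *ᵥ x) j‖ ^ 2 ≤ ∑ j, ‖A‖ ^ 2 * ∑ k, ‖B j k‖ ^ 2 * ‖x k‖ ^ 2 :=
        Finset.sum_le_sum fun j _ => norm_sq_hadamard_mulVec_apply_le A B x j
    _ = ‖A‖ ^ 2 * ∑ k, (∑ j, ‖B j k‖ ^ 2) * ‖x k‖ ^ 2 := by
        simp only [← Finset.mul_sum, Finset.sum_mul]
        rw [Finset.sum_comm]
    _ ≤ ‖A‖ ^ 2 * ∑ k, ‖B‖ ^ 2 * ‖x k‖ ^ 2 := by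
        gcongr with k
        exact B.sum_norm_sq_col_le_l2_opNorm_sq k
    _ = (‖A‖ * ‖B‖) ^ 2 * ∑ k, ‖x k‖ ^ 2 := by
        rw [← Finset.mul_sum, mul_pow, mul_assoc]

end Matrix

section IPT

variable {R n : Type*} [CommRing R] [Fintype n] [DecidableEq n]

def iptMap (G Δ Z : Matrix n n R) : Matrix n n R :=
  1 + G ⊙ (Z * diagonal (fun i => (Δ * Z) i i) - Δ * Z)

variable {G Δ : Matrix n n R}

lemma iptMap_apply (Z : Matrix n n R) (j k : n) :
    iptMap G Δ Z j k = (1 : Matrix n n R) j k + G j k * (Z j k * (Δ * Z) k k - (Δ * Z) j k) := by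
  simp [iptMap, mul_diagonal]

lemma iptMap_apply_eq_of_col_eq {Z W : Matrix n n R} {k : n} (h : ∀ j, Z j k = W j k) (j : n) :
    iptMap G Δ Z j k = iptMap G Δ W j k := by
  simp only [iptMap_apply, mul_apply, h]

lemma iptMap_apply_diag (hG : ∀ j, G j j = 0) (Z : Matrix n n R) (k : n) :
    iptMap G Δ Z k k = 1 := by
  simp [iptMap_apply, hG]

lemma iptMap_apply_of_mulVec_col_eq_smul {ε : n → R} (hGdiag : ∀ j, G j j = 0)
    (hGoff : ∀ j k, j ≠ k → G j k * (ε j - ε k) = 1) {Z : Matrix n n R} {k : n} {μ : R}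
    (hZk : (diagonal ε + Δ) *ᵥ (fun j => Z j k) = μ • fun j => Z j k) (hkk : Z k k = 1)
    (j : n) : iptMap G Δ Z j k = Z j k := by
  have hΔ : ∀ l, (Δ * Z) l k = (μ - ε l) * Z l k := fun l => by
    have := congrFun hZk l
    simp only [add_mulVec, Pi.add_apply, mulVec_diagonal, Pi.smul_apply, smul_eq_mul] at this
    rw [mul_apply, sub_mul, ← this]
    simp [mulVec, dotProduct]
  rcases eq_or_ne j k with rfl | hjk
  · rw [iptMap_apply_diag hGdiag, hkk]
  · rw [iptMap_apply, hΔ, hΔ, hkk, one_apply_ne hjk, zero_add]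
    linear_combination (Z j k) * hGoff j k hjk

lemma iptMap_updateCol_eq_self {ε : n → R} (hGdiag : ∀ j, G j j = 0)
    (hGoff : ∀ j k, j ≠ k → G j k * (ε j - ε k) = 1) {Z : Matrix n n R}
    (hZ : iptMap G Δ Z = Z) {i : n} {c : n → R} {μ : R}
    (hc : (diagonal ε + Δ) *ᵥ c = μ • c) (hci : c i = 1) :
    iptMap G Δ (Z.updateCol i c) = Z.updateCol i c := by
  ext j k
  rcases eq_or_ne k i with rfl | hki
  · refine iptMap_apply_of_mulVec_col_eq_smul hGdiag hGoff (μ := μ) ?_ (by simpa) j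
    simpa using hc
  · rw [iptMap_apply_eq_of_col_eq (W := Z) (fun l => updateCol_ne hki) j, hZ, updateCol_ne hki]

end IPT

section Contraction

variable {𝕜 n : Type*} [RCLike 𝕜] [Fintype n] [DecidableEq n]

lemma norm_iptMap_sub_one_le (G Δ Z : Matrix n n 𝕜) :
    ‖iptMap G Δ Z - 1‖ ≤ ‖G‖ * ‖Δ‖ * (‖Z‖ * (‖Z‖ + 1)) := by
  have hΔZ : ‖Δ * Z‖ ≤ ‖Δ‖ * ‖Z‖ := l2_opNorm_mul Δ Z
  have hdiag : ‖diagonal (fun i => (Δ * Z) i i)‖ ≤ ‖Δ‖ * ‖Z‖ :=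
    (Δ * Z).l2_opNorm_diagonal_diag_le.trans hΔZ
  calc ‖iptMap G Δ Z - 1‖
      = ‖G ⊙ (Z * diagonal (fun i => (Δ * Z) i i) - Δ * Z)‖ := by
        rw [iptMap, add_sub_cancel_left]
    _ ≤ ‖G‖ * (‖Z‖ * ‖diagonal (fun i => (Δ * Z) i i)‖ + ‖Δ * Z‖) := by
        grw [l2_opNorm_hadamard_le, norm_sub_le, l2_opNorm_mul]
    _ ≤ ‖G‖ * (‖Z‖ * (‖Δ‖ * ‖Z‖) + ‖Δ‖ * ‖Z‖) := by gcongr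
    _ = ‖G‖ * ‖Δ‖ * (‖Z‖ * (‖Z‖ + 1)) := by ring

/-- `3 - 2√2` is the constant with `(3 - 2√2) ‖Z‖(‖Z‖ + 1) ≤ √2` whenever `‖Z‖ ≤ 1 + √2`. -/
lemma norm_sub_one_lt_sqrt_two_of_iptMap_eq_self {G Δ Z : Matrix n n 𝕜}
    (hsmall : ‖G‖ * ‖Δ‖ < 3 - 2 * √2) (hZ : ‖Z - 1‖ ≤ √2) (hfix : iptMap G Δ Z = Z) :
    ‖Z - 1‖ < √2 := by
  have hZnorm : ‖Z‖ ≤ 1 + √2 := by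
    calc ‖Z‖ = ‖(Z - 1) + 1‖ := by rw [sub_add_cancel]
      _ ≤ √2 + 1 := by grw [norm_add_le, hZ, l2_opNorm_one_le]
      _ = 1 + √2 := add_comm _ _
  have hs : √2 ^ 2 = 2 := Real.sq_sqrt zero_le_two
  calc ‖Z - 1‖ = ‖iptMap G Δ Z - 1‖ := by rw [hfix]
    _ ≤ ‖G‖ * ‖Δ‖ * (‖Z‖ * (‖Z‖ + 1)) := norm_iptMap_sub_one_le G Δ Z
    _ ≤ ‖G‖ * ‖Δ‖ * ((1 + √2) * (1 + √2 + 1)) := by gcongr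
    _ < (3 - 2 * √2) * ((1 + √2) * (1 + √2 + 1)) := by gcongr
    _ = √2 := by linear_combination (-(2 * √2 + 3)) * hs

end Contraction

lemma Submodule.exists_ne_zero_apply_eq_zero {K E : Type*} [Field K] [AddCommGroup E]
    [Module K E] (V : Submodule K E) [FiniteDimensional K V] (hV : 1 < Module.finrank K V)
    (f : E →ₗ[K] K) : ∃ u ∈ V, u ≠ 0 ∧ f u = 0 := by
  have hker : LinearMap.ker (f ∘ₗ V.subtype) ≠ ⊥ :=
    LinearMap.ker_ne_bot_of_finrank_lt (by rwa [Module.finrank_self])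
  obtain ⟨u, hu, hu0⟩ := Submodule.exists_mem_ne_zero_of_ne_bot hker
  exact ⟨u, u.2, by simpa using hu0, hu⟩

theorem IPT_fixed_point_no_multidimensional_eigenspace_general {n : ℕ}
    (ε : Fin n → ℂ) (hdist : Function.Injective ε) (Δ : Matrix (Fin n) (Fin n) ℂ)
    (G : Matrix (Fin n) (Fin n) ℂ)
    (hG : G = Matrix.of fun j k => if j = k then 0 else (ε j - ε k)⁻¹)
    (F : Matrix (Fin n) (Fin n) ℂ → Matrix (Fin n) (Fin n) ℂ)
    (hF : F = fun Z => 1 + G ⊙ (Z * Matrix.diagonal (fun i => (Δ * Z) i i) - Δ * Z))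
    (hsmall : ‖G‖ * ‖Δ‖ < 3 - 2 * Real.sqrt 2)
    (Zs : Matrix (Fin n) (Fin n) ℂ)
    (hmem : Zs ∈ Metric.closedBall (1 : Matrix (Fin n) (Fin n) ℂ) (Real.sqrt 2))
    (hfix : F Zs = Zs)
    (huniq : ∀ W ∈ Metric.closedBall (1 : Matrix (Fin n) (Fin n) ℂ) (Real.sqrt 2),
      F W = W → W = Zs) :
    ∀ (i : Fin n) (μ : ℂ),
      (Matrix.diagonal ε + Δ).mulVec (fun j => Zs j i) = μ • (fun j => Zs j i) →
      ¬ 2 ≤ Module.finrank ℂ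
          (Module.End.eigenspace (Matrix.diagonal ε + Δ).mulVecLin μ) := by
  intro i μ hcol hrank
  subst hF
  replace hfix : iptMap G Δ Zs = Zs := hfix
  have hGdiag : ∀ j, G j j = 0 := fun j => by simp [hG]
  have hGoff : ∀ j k, j ≠ k → G j k * (ε j - ε k) = 1 := fun j k hjk => by
    simpa [hG, hjk] using inv_mul_cancel₀ (sub_ne_zero.mpr (hdist.ne hjk))
  obtain ⟨u, hu, hu0, hui⟩ := Submodule.exists_ne_zero_apply_eq_zero _ hrank (LinearMap.proj i)
  rw [Module.End.mem_eigenspace_iff, mulVecLin_apply] at hu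
  rw [LinearMap.proj_apply] at hui
  have hZs : Zs ∈ Metric.ball 1 √2 := mem_ball_iff_norm.mpr <|
    norm_sub_one_lt_sqrt_two_of_iptMap_eq_self hsmall (mem_closedBall_iff_norm.mp hmem) hfix
  have hZii : Zs i i = 1 :=
    (congrFun (congrFun hfix i) i).symm.trans (iptMap_apply_diag hGdiag Zs i)
  set E := updateCol 0 i u
  have hline : Tendsto (fun t : ℂ => Zs + t • E) (𝓝 0) (𝓝 Zs) := by
    have hcont : Continuous fun t : ℂ => Zs + t • E := by fun_prop
    simpa using hcont.tendsto 0
  have hnear : ∀ᶠ t in 𝓝[≠] (0 : ℂ), Zs + t • E ∈ Metric.ball 1 √2 :=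
    nhdsWithin_le_nhds (hline (Metric.isOpen_ball.mem_nhds hZs))
  obtain ⟨t, ht_ball, ht0⟩ := (hnear.and self_mem_nhdsWithin).exists
  have hW : Zs + t • E = Zs.updateCol i ((fun j => Zs j i) + t • u) := by
    ext j k
    rcases eq_or_ne k i with rfl | hki <;> simp [E, *]
  have hWfix : iptMap G Δ (Zs + t • E) = Zs + t • E := by
    rw [hW]
    refine iptMap_updateCol_eq_self hGdiag hGoff hfix (μ := μ) ?_ ?_
    · rw [mulVec_add, mulVec_smul, hcol, hu, smul_comm, smul_add]
    · simp [hui, hZii]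
  have hE : t • E = 0 := add_eq_left.mp (huniq _ (Metric.ball_subset_closedBall ht_ball) hWfix)
  have hE0 : E = 0 := (smul_eq_zero.mp hE).resolve_left ht0
  exact hu0 (funext fun j => by simpa [E] using congrFun (congrFun hE0 j) i)

/-- Under the contraction condition `‖G‖‖Δ‖ < 3 − 2√2`, if `Zs` is the unique fixed
point of the IPT map `F` in the closed ball `B_{√2}(I)`, then no column of `Zs` is an
eigenvector of `M = D + Δ` lying in an eigenspace of dimension at least `2`. -/
theorem IPT_fixed_point_no_multidimensional_eigenspace {n : ℕ} [NeZero n]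
    (ε : Fin n → ℂ) (hdist : Function.Injective ε) (Δ : Matrix (Fin n) (Fin n) ℂ)
    (G : Matrix (Fin n) (Fin n) ℂ)
    (hG : G = Matrix.of fun j k => if j = k then 0 else (ε j - ε k)⁻¹)
    (F : Matrix (Fin n) (Fin n) ℂ → Matrix (Fin n) (Fin n) ℂ)
    (hF : F = fun Z => 1 + G ⊙ (Z * Matrix.diagonal (fun i => (Δ * Z) i i) - Δ * Z))
    (hsmall : ‖G‖ * ‖Δ‖ < 3 - 2 * Real.sqrt 2)
    (Zs : Matrix (Fin n) (Fin n) ℂ)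
    (hmem : Zs ∈ Metric.closedBall (1 : Matrix (Fin n) (Fin n) ℂ) (Real.sqrt 2))
    (hfix : F Zs = Zs)
    (huniq : ∀ W ∈ Metric.closedBall (1 : Matrix (Fin n) (Fin n) ℂ) (Real.sqrt 2),
      F W = W → W = Zs) :
    ∀ (i : Fin n) (μ : ℂ),
      (Matrix.diagonal ε + Δ).mulVec (fun j => Zs j i) = μ • (fun j => Zs j i) →
      ¬ 2 ≤ Module.finrank ℂ
          (Module.End.eigenspace (Matrix.diagonal ε + Δ).mulVecLin μ) :=
  IPT_fixed_point_no_multidimensional_eigenspace_general ε hdist Δ G hG F hF hsmall Zs hmem hfix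
    huniq
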